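/- If V' is an ICS of a finite graph G = (V,E) with |V'| = k, then at most k vertices v ∈ V satisfy |N⁺(v) ∩ V'| = 1, and every vertex satisfies |N⁺(v) ∩ V'| ≥ 1; hence Σ_{v∈V} |N⁺(v) ∩ V'| ≥ k + 2(|V| − k). -/

import Mathlib

/-!
The signature map `v ↦ N⁺(v) ∩ V'` is injective, so the vertices with a singleton signature
inject into the `k` singletons of `V'`. Every other vertex has a signature of size at least two,
which gives `∑ |N⁺(v) ∩ V'| ≥ 2|V| - k`.
-/

variable {V : Type*} [Fintype V] [DecidableEq V]

/-- Closed neighborhood `N⁺(v)` of a vertex, as a finset. -/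
def closedNbhd (G : SimpleGraph V) [DecidableRel G.Adj] (v : V) : Finset V :=
  Finset.univ.filter fun u => u = v ∨ G.Adj v u

/-- `V'` is an Identifying Code Set of `G`: all closed-neighborhood
signatures `N⁺(v) ∩ V'` are pairwise distinct. -/
def IsICS (G : SimpleGraph V) [DecidableRel G.Adj] (V' : Finset V) : Prop :=
  ∀ v w : V, v ≠ w → closedNbhd G v ∩ V' ≠ closedNbhd G w ∩ V'

open Finset

theorem Finset.card_filter_card_eq_one_le {α β : Type*} (s : Finset α) (t : Finset β)
    (f : α → Finset β) (hf : Set.InjOn f s) (hft : ∀ a ∈ s, f a ⊆ t) :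
    #{a ∈ s | #(f a) = 1} ≤ #t :=
  calc #{a ∈ s | #(f a) = 1}
      ≤ #(t.powersetCard 1) := by
        refine card_le_card_of_injOn f (fun a ha => ?_) (hf.mono (filter_subset _ _))
        obtain ⟨has, hcard⟩ := mem_filter.mp ha
        exact mem_powersetCard.mpr ⟨hft a has, hcard⟩
    _ = #t := by simp

theorem Finset.two_mul_card_le_sum_add_card_filter_eq_one {α : Type*} (s : Finset α)
    (f : α → ℕ) (hf : ∀ a ∈ s, 1 ≤ f a) :
    2 * #s ≤ ∑ a ∈ s, f a + #{a ∈ s | f a = 1} := by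
  have hpoint : ∀ a ∈ s, 2 ≤ f a + if f a = 1 then 1 else 0 := by
    intro a ha
    have := hf a ha
    split_ifs <;> omega
  calc 2 * #s = ∑ _a ∈ s, 2 := by rw [sum_const, smul_eq_mul, mul_comm]
    _ ≤ ∑ a ∈ s, (f a + if f a = 1 then 1 else 0) := sum_le_sum hpoint
    _ = ∑ a ∈ s, f a + #{a ∈ s | f a = 1} := by rw [sum_add_distrib, sum_boole, Nat.cast_id]

theorem IsICS.injective {G : SimpleGraph V} [DecidableRel G.Adj] {V' : Finset V}
    (h : IsICS G V') : Function.Injective fun v => closedNbhd G v ∩ V' := fun v w hvw =>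
  by_contra fun hne => h v w hne hvw

/-- If V' is an ICS of G which is also dominating (every signature is
nonempty), then at most |V'| vertices have singleton signature, every vertex
has signature of size at least 1, and the total signature size is at least
k + 2(|V| − k) where k = |V'|. -/
theorem ics_signature_sum_lower_bound (G : SimpleGraph V) [DecidableRel G.Adj]
    (V' : Finset V) (h : IsICS G V')
    (hdom : ∀ v : V, 1 ≤ (closedNbhd G v ∩ V').card) :
    (Finset.univ.filter fun v : V => (closedNbhd G v ∩ V').card = 1).card ≤ V'.card ∧
    V'.card + 2 * (Fintype.card V - V'.card) ≤
      ∑ v : V, (closedNbhd G v ∩ V').card := by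
  have hsingletons := card_filter_card_eq_one_le univ V' _ h.injective.injOn
    fun _ _ => inter_subset_right
  have hsum := two_mul_card_le_sum_add_card_filter_eq_one univ _ fun v _ => hdom v
  have hk : #V' ≤ Fintype.card V := card_le_univ V'
  rw [card_univ] at hsum
  exact ⟨hsingletons, by omega⟩
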